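/- Let G be a finite simple graph with n vertices and let H = H(G) be the graph obtained from G by one step of the half-model. Then the clique number of H satisfies ω(H) ≥ min(⌊n/2⌋ + 1, ω(G) + 1). -/

import Mathlib

open SimpleGraph

/-- The set of "clones": one new vertex for each subset of `V` of size `⌊|V|/2⌋`. -/
abbrev halfClones (V : Type) [Fintype V] [DecidableEq V] : Type :=
  {S : Finset V // S.card = Fintype.card V / 2}

/-- One step of the half-model: old vertices keep their adjacencies; the clone `v_S`
is adjacent exactly to the members of `S`; clones form an independent set. -/
def halfStep {V : Type} [Fintype V] [DecidableEq V] (G : SimpleGraph V) :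
    SimpleGraph (V ⊕ halfClones V) where
  Adj x y :=
    match x, y with
    | Sum.inl u, Sum.inl v => G.Adj u v
    | Sum.inl u, Sum.inr S => u ∈ S.1
    | Sum.inr S, Sum.inl u => u ∈ S.1
    | Sum.inr _, Sum.inr _ => False
  symm := ⟨by
    rintro (u | S) (v | T) h
    · exact G.adj_symm h
    · exact h
    · exact h
    · exact h.elim⟩
  loopless := ⟨by
    rintro (u | S) h
    · exact G.irrefl h
    · exact h.elim⟩

instance halfStep.instDecidableRelAdj {V : Type} [Fintype V] [DecidableEq V]
    (G : SimpleGraph V) [DecidableRel G.Adj] : DecidableRel (halfStep G).Adj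
  | Sum.inl u, Sum.inl v => inferInstanceAs (Decidable (G.Adj u v))
  | Sum.inl u, Sum.inr S => inferInstanceAs (Decidable (u ∈ S.1))
  | Sum.inr S, Sum.inl u => inferInstanceAs (Decidable (u ∈ S.1))
  | Sum.inr _, Sum.inr _ => inferInstanceAs (Decidable False)

/-! The clone of any `⌊n/2⌋`-set containing a clique `t` of `G` is adjacent to all of `t`, so
it extends `t` to a clique of `H(G)`. Applying this to a clique of `G` of size
`min(⌊n/2⌋, ω(G))` gives the bound. -/

namespace SimpleGraph

variable {α : Type*} {G : SimpleGraph α}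

theorem exists_isNClique_of_le_cliqueNum {k : ℕ} (hk : k ≤ G.cliqueNum) :
    ∃ s, G.IsNClique k s := by
  obtain ⟨t, ht⟩ := G.exists_isNClique_cliqueNum
  obtain ⟨s, hst, hs⟩ := Finset.exists_subset_card_eq (ht.card_eq ▸ hk)
  exact ⟨s, ht.isClique.subset (Finset.coe_subset.2 hst), hs⟩

end SimpleGraph

namespace halfStep

variable {V : Type} [Fintype V] [DecidableEq V] {G : SimpleGraph V}

@[simp]
theorem adj_inl_inl {u v : V} : (halfStep G).Adj (.inl u) (.inl v) ↔ G.Adj u v := Iff.rfl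

@[simp]
theorem adj_inr_inl {S : halfClones V} {u : V} : (halfStep G).Adj (.inr S) (.inl u) ↔ u ∈ S.1 :=
  Iff.rfl

theorem exists_clone_superset {t : Finset V} (ht : t.card ≤ Fintype.card V / 2) :
    ∃ S : halfClones V, t ⊆ S.1 := by
  obtain ⟨S, htS, hS⟩ := Finset.exists_superset_card_eq ht (Nat.div_le_self _ _)
  exact ⟨⟨S, hS⟩, htS⟩

theorem isClique_insert_clone {t : Finset V} (ht : G.IsClique t) {S : halfClones V}
    (htS : t ⊆ S.1) :
    (halfStep G).IsClique (insert (Sum.inr S : V ⊕ halfClones V) (Sum.inl '' t)) := by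
  refine isClique_insert.2 ⟨?_, ?_⟩
  · rintro _ ⟨u, hu, rfl⟩ _ ⟨v, hv, rfl⟩ huv
    exact adj_inl_inl.2 (ht hu hv (ne_of_apply_ne _ huv))
  · rintro _ ⟨u, hu, rfl⟩ -
    exact adj_inr_inl.2 (htS hu)

theorem succ_card_le_cliqueNum {t : Finset V} (ht : G.IsClique t)
    (htcard : t.card ≤ Fintype.card V / 2) : t.card + 1 ≤ (halfStep G).cliqueNum := by
  obtain ⟨S, htS⟩ := exists_clone_superset htcard
  let s : Finset (V ⊕ halfClones V) := insert (.inr S) (t.map .inl)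
  have hs : (halfStep G).IsClique (s : Set _) := by
    rw [Finset.coe_insert, Finset.coe_map]
    exact isClique_insert_clone ht htS
  have hcard : s.card = t.card + 1 := by
    rw [Finset.card_insert_of_notMem (by simp), Finset.card_map]
  exact hcard ▸ hs.card_le_cliqueNum

end halfStep

/-- the clique number of `H = H(G)` satisfies
`ω(H) ≥ min(⌊n/2⌋ + 1, ω(G) + 1)`. -/
theorem stmt_12 {V : Type} [Fintype V] [DecidableEq V] (G : SimpleGraph V) :
    min (Fintype.card V / 2 + 1) (G.cliqueNum + 1) ≤ (halfStep G).cliqueNum := by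
  obtain ⟨t, ht⟩ := G.exists_isNClique_of_le_cliqueNum (min_le_right (Fintype.card V / 2) _)
  have := halfStep.succ_card_le_cliqueNum ht.isClique (ht.card_eq ▸ min_le_left _ _)
  rwa [ht.card_eq, ← min_add_add_right] at this
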